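/- Let A ∈ ℝ^{n×n} with singular values σ₁(A) ≥ … ≥ σₙ(A), let ε ∈ (0,1), and let k ≤ n. Suppose unit vectors z₁,…,z_k ∈ ℝⁿ are such that, defining A⁽¹⁾ = A and A⁽ⁱ⁺¹⁾ = A⁽ⁱ⁾ − zᵢzᵢᵀA for 1 ≤ i ≤ k, each zᵢ lies in the column space of A⁽ⁱ⁾ and satisfies ‖(A⁽ⁱ⁾)ᵀzᵢ‖₂ ≥ (1 − ε)·σ₁(A⁽ⁱ⁾). Then z₁,…,z_k are pairwise orthogonal unit vectors, and for every i ∈ {1,…,k}: (1 − ε)·σᵢ(A) ≤ ‖Aᵀzᵢ‖₂ ≤ σᵢ(A) + σ₁(A)·√(2iε). -/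

import Mathlib

open Matrix BigOperators

/-- The spectral (operator) norm of a real square matrix. -/
noncomputable def specNorm {m : ℕ} (M : Matrix (Fin m) (Fin m) ℝ) : ℝ :=
  ‖LinearMap.toContinuousLinearMap (Matrix.toEuclideanLin M)‖

/-- The `n × n` all-ones matrix. -/
def allOnes (m : ℕ) : Matrix (Fin m) (Fin m) ℝ := Matrix.of fun _ _ => 1

/-- Euclidean norm of a vector in `ℝⁿ`. -/
noncomputable def vnorm {m : ℕ} (x : Fin m → ℝ) : ℝ := Real.sqrt (∑ i, (x i) ^ 2)

/-- The (unsorted) singular values of a real square matrix: square roots of the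
eigenvalues of `Aᵀ A`. -/
noncomputable def svRaw {m : ℕ} (A : Matrix (Fin m) (Fin m) ℝ) : Fin m → ℝ :=
  fun j => Real.sqrt ((Matrix.isHermitian_iff_isSymm.mpr (Matrix.isSymm_transpose_mul_self A)).eigenvalues j)

/-- `sval A i` is the `i`-th largest singular value of `A` (1-based indexing);
it is `0` for `i = 0` and for `i > m`. -/
noncomputable def sval {m : ℕ} (A : Matrix (Fin m) (Fin m) ℝ) (i : ℕ) : ℝ :=
  if h : 1 ≤ i ∧ i ≤ m then (svRaw A ∘ Tuple.sort (svRaw A)) ⟨m - i, by omega⟩ else 0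

/-- The nuclear (Schatten-1) norm of a real square matrix: the sum of its singular values. -/
noncomputable def nuclearNorm {m : ℕ} (A : Matrix (Fin m) (Fin m) ℝ) : ℝ :=
  ∑ j, svRaw A j

/-- The smallest eigenvalue of a symmetric real matrix, via the Rayleigh quotient. -/
noncomputable def lamMin {m : ℕ} (A : Matrix (Fin m) (Fin m) ℝ) : ℝ :=
  sInf {r : ℝ | ∃ x : Fin m → ℝ, vnorm x = 1 ∧ r = x ⬝ᵥ (A *ᵥ x)}

/-!
The `zᵢ` are orthonormal because `zₗ` lies in the column space of
`Bₗ = (1 - ∑_{j<l} z_j z_jᵀ) A`, which is orthogonal to `z_j` as soon as `z_1, …, z_{l-1}` are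
orthonormal.

Lower bound: `Bᵢᵀ` agrees with `Aᵀ` on vectors orthogonal to `z_1, …, z_{i-1}`, and by the easy
half of Courant–Fischer for `A Aᵀ` some unit vector `x` of this kind has `‖Aᵀ x‖ ≥ σᵢ(A)`.
Hence `σ₁(Bᵢ) ≥ σᵢ(A)`, and `‖Aᵀ zᵢ‖ = ‖Bᵢᵀ zᵢ‖ ≥ (1 - ε) σ₁(Bᵢ)`.

Upper bound: Ky Fan's maximum principle for `A Aᵀ` and the orthonormal `z_1, …, z_i` gives
`∑_{j ≤ i} ‖Aᵀ z_j‖² ≤ ∑_{j ≤ i} σ_j(A)²`; subtracting the lower bounds for `j < i` leaves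
`‖Aᵀ zᵢ‖² ≤ σᵢ(A)² + (i - 1)(2ε - ε²) σ₁(A)²`.

Both bounds concern `A Aᵀ`, while `sval` is defined through `Aᵀ A`; the two have the same
characteristic polynomial, hence the same eigenvalues.
-/

open InnerProductSpace Module

theorem exists_norm_eq_one_forall_inner_eq_zero {E ι : Type*} [NormedAddCommGroup E]
    [InnerProductSpace ℝ E] [FiniteDimensional ℝ E] [Fintype ι] (w : ι → E)
    (h : Fintype.card ι < finrank ℝ E) : ∃ x : E, ‖x‖ = 1 ∧ ∀ j, ⟪w j, x⟫_ℝ = 0 := by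
  set U := Submodule.span ℝ (Set.range w)
  have hU : 0 < finrank ℝ Uᗮ := by
    have := U.finrank_add_finrank_orthogonal
    have : finrank ℝ U ≤ Fintype.card ι := finrank_range_le_card w
    omega
  obtain ⟨y, hyU, hy0⟩ := Submodule.exists_mem_ne_zero_of_ne_bot
    (Submodule.one_le_finrank_iff.mp hU)
  refine ⟨‖y‖⁻¹ • y, norm_smul_inv_norm hy0, fun j => ?_⟩
  rw [real_inner_smul_right, Submodule.inner_right_of_mem_orthogonal
    (Submodule.subset_span (Set.mem_range_self j)) hyU, mul_zero]

/-- The terms `(f k - μ) * (c k - 1)` for `k ∈ s` and `(f k - μ) * c k` for `k ∉ s` are all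
nonpositive. -/
theorem Finset.sum_mul_le_sum_of_le_one {ι : Type*} [Fintype ι] [DecidableEq ι] (f c : ι → ℝ)
    (s : Finset ι) (μ : ℝ) (hs : ∀ k ∈ s, μ ≤ f k) (hsc : ∀ k ∉ s, f k ≤ μ)
    (hc0 : ∀ k, 0 ≤ c k) (hc1 : ∀ k, c k ≤ 1) (hsum : ∑ k, c k = s.card) :
    ∑ k, f k * c k ≤ ∑ k ∈ s, f k := by
  have hterm : ∀ k, (f k - μ) * c k ≤ if k ∈ s then f k - μ else 0 := fun k => by
    split_ifs with hk
    · exact mul_le_of_le_one_right (sub_nonneg.mpr (hs k hk)) (hc1 k)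
    · exact mul_nonpos_of_nonpos_of_nonneg (sub_nonpos.mpr (hsc k hk)) (hc0 k)
  have := Finset.sum_le_sum fun k (_ : k ∈ Finset.univ) => hterm k
  simp only [sub_mul, Finset.sum_sub_distrib, ← Finset.mul_sum, hsum, Finset.sum_ite_mem,
    Finset.univ_inter, Finset.sum_const, nsmul_eq_mul] at this
  rw [mul_comm μ] at this
  linarith

namespace LinearMap.IsSymmetric

variable {E : Type*} [NormedAddCommGroup E] [InnerProductSpace ℝ E] [FiniteDimensional ℝ E]
  {n : ℕ} {T : E →ₗ[ℝ] E} (hT : T.IsSymmetric) (hn : finrank ℝ E = n)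

theorem inner_apply_self_eq_sum (x : E) :
    ⟪T x, x⟫_ℝ = ∑ k, hT.eigenvalues hn k * ⟪hT.eigenvectorBasis hn k, x⟫_ℝ ^ 2 := by
  rw [← (hT.eigenvectorBasis hn).sum_inner_mul_inner (T x) x]
  refine Finset.sum_congr rfl fun k _ => ?_
  rw [hT x, hT.apply_eigenvectorBasis, real_inner_smul_right, real_inner_comm x,
    RCLike.ofReal_real_eq_id, id_eq]
  ring

/-- The easy half of Courant–Fischer: the eigenvectors `v_k` with `k > t` together with the `u j`
are fewer than `finrank E` vectors, and a unit vector orthogonal to all of them has Rayleigh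
quotient at least `λ_t`. -/
theorem exists_unit_orthogonal_eigenvalues_le_inner {ι : Type*} [Fintype ι] (u : ι → E)
    (t : Fin n) (h : Fintype.card ι ≤ t) :
    ∃ x : E, ‖x‖ = 1 ∧ (∀ j, ⟪u j, x⟫_ℝ = 0) ∧ hT.eigenvalues hn t ≤ ⟪T x, x⟫_ℝ := by
  set v := hT.eigenvectorBasis hn
  obtain ⟨x, hx, hux⟩ := exists_norm_eq_one_forall_inner_eq_zero
    (Sum.elim u fun k : Finset.Ioi t => v k)
    (by rw [Fintype.card_sum, Fintype.card_coe, Fin.card_Ioi, hn]; omega)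
  refine ⟨x, hx, fun j => hux (.inl j), ?_⟩
  have hterm : ∀ k, hT.eigenvalues hn t * ⟪v k, x⟫_ℝ ^ 2 ≤
      hT.eigenvalues hn k * ⟪v k, x⟫_ℝ ^ 2 := fun k => by
    rcases le_or_gt k t with hk | hk
    · exact mul_le_mul_of_nonneg_right (hT.eigenvalues_antitone hn hk) (sq_nonneg _)
    · simp [show ⟪v k, x⟫_ℝ = 0 from hux (.inr ⟨k, Finset.mem_Ioi.mpr hk⟩)]
  calc hT.eigenvalues hn t = ∑ k, hT.eigenvalues hn t * ⟪v k, x⟫_ℝ ^ 2 := by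
        rw [← Finset.mul_sum, v.sum_sq_inner_right, hx, one_pow, mul_one]
    _ ≤ _ := (Finset.sum_le_sum fun k _ => hterm k).trans (hT.inner_apply_self_eq_sum hn x).ge

/-- Ky Fan's maximum principle. The weights `c k = ∑ j ⟪v k, q j⟫²` lie in `[0, 1]` by Bessel's
inequality and add up to the number of vectors `q j`. -/
theorem sum_inner_apply_self_le_sum_eigenvalues {ι : Type*} [Fintype ι] (q : ι → E)
    (hq : Orthonormal ℝ q) (t : Fin n) (h : Fintype.card ι = t + 1) :
    ∑ j, ⟪T (q j), q j⟫_ℝ ≤ ∑ k ∈ Finset.Iic t, hT.eigenvalues hn k := by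
  set v := hT.eigenvectorBasis hn
  set c : Fin n → ℝ := fun k => ∑ j, ⟪v k, q j⟫_ℝ ^ 2
  have hc1 : ∀ k, c k ≤ 1 := fun k => by
    simpa [c, real_inner_comm] using hq.sum_inner_products_le (v k) (s := Finset.univ)
  have hsum : ∑ k, c k = (Finset.Iic t).card := by
    rw [Finset.sum_comm]
    simp [v.sum_sq_inner_right, hq.1, Fin.card_Iic, h]
  calc ∑ j, ⟪T (q j), q j⟫_ℝ = ∑ k, hT.eigenvalues hn k * c k := by
        simp only [hT.inner_apply_self_eq_sum hn, c, Finset.mul_sum]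
        exact Finset.sum_comm
    _ ≤ _ := Finset.sum_mul_le_sum_of_le_one _ c _ (hT.eigenvalues hn t)
        (fun k hk => hT.eigenvalues_antitone hn (Finset.mem_Iic.mp hk))
        (fun k hk => hT.eigenvalues_antitone hn (not_le.mp (by simpa using hk)).le)
        (fun k => Finset.sum_nonneg fun j _ => sq_nonneg _) hc1 hsum

end LinearMap.IsSymmetric

namespace Matrix

variable {n : ℕ}

theorem isSymmetric_toEuclideanLin_transpose_mul_self (D : Matrix (Fin n) (Fin n) ℝ) :
    (toEuclideanLin (Dᵀ * D)).IsSymmetric :=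
  isSymmetric_toEuclideanLin_iff.mpr (isHermitian_iff_isSymm.mpr (isSymm_transpose_mul_self D))

/-- `IsHermitian.eigenvalues` is indexed through an arbitrary `Fintype.equivOfCardEq`, so it is
only a rearrangement of the sorted eigenvalues of the operator. -/
theorem exists_perm_eigenvalues_eq_comp (D : Matrix (Fin n) (Fin n) ℝ) :
    ∃ τ : Equiv.Perm (Fin n),
      (isHermitian_iff_isSymm.mpr (isSymm_transpose_mul_self D)).eigenvalues =
        (isSymmetric_toEuclideanLin_transpose_mul_self D).eigenvalues
          finrank_euclideanSpace_fin ∘ τ := by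
  have key : ∀ {m : ℕ} (h : Fintype.card (Fin n) = m)
      (hm : finrank ℝ (EuclideanSpace ℝ (Fin n)) = m),
      (isHermitian_iff_isSymm.mpr (isSymm_transpose_mul_self D)).eigenvalues₀ =
        (isSymmetric_toEuclideanLin_transpose_mul_self D).eigenvalues hm ∘ finCongr h := by
    rintro m rfl hm
    rfl
  exact ⟨(Fintype.equivOfCardEq (Fintype.card_fin _)).symm.trans (finCongr (Fintype.card_fin n)),
    funext fun j => by simp only [IsHermitian.eigenvalues]; rw [key (Fintype.card_fin n)]; rfl⟩

theorem sval_succ (D : Matrix (Fin n) (Fin n) ℝ) (t : Fin n) :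
    sval D (t + 1) = √((isSymmetric_toEuclideanLin_transpose_mul_self D).eigenvalues
      finrank_euclideanSpace_fin t) := by
  set g := (isSymmetric_toEuclideanLin_transpose_mul_self D).eigenvalues finrank_euclideanSpace_fin
  obtain ⟨τ, hτ⟩ := exists_perm_eigenvalues_eq_comp D
  have hf : svRaw D = Real.sqrt ∘ g ∘ τ := by
    funext j
    simp only [svRaw, hτ]
    rfl
  have hsort : svRaw D ∘ (Fin.revPerm.trans τ.symm) = svRaw D ∘ Tuple.sort (svRaw D) := by
    refine Tuple.comp_sort_eq_comp_iff_monotone.mpr fun a b hab => ?_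
    simp only [hf, Function.comp_apply, Equiv.trans_apply, Equiv.apply_symm_apply]
    exact Real.sqrt_le_sqrt ((isSymmetric_toEuclideanLin_transpose_mul_self D).eigenvalues_antitone
      _ (Fin.rev_le_rev.mpr hab))
  rw [sval, dif_pos ⟨by omega, t.isLt⟩, ← hsort]
  simp only [hf, Function.comp_apply, Equiv.trans_apply, Equiv.apply_symm_apply]
  congr 2
  ext
  simp [Fin.revPerm]
  omega

theorem sval_transpose (D : Matrix (Fin n) (Fin n) ℝ) (i : ℕ) : sval Dᵀ i = sval D i := by
  have : svRaw Dᵀ = svRaw D := by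
    have h := (IsHermitian.eigenvalues_eq_eigenvalues_iff
      (isHermitian_iff_isSymm.mpr (isSymm_transpose_mul_self Dᵀ))
      (isHermitian_iff_isSymm.mpr (isSymm_transpose_mul_self D))).mpr
      (by rw [transpose_transpose, charpoly_mul_comm])
    exact funext fun j => congrArg Real.sqrt (congrFun h j)
  simp only [sval, this]

theorem sval_nonneg (D : Matrix (Fin n) (Fin n) ℝ) (i : ℕ) : 0 ≤ sval D i := by
  unfold sval
  split
  · exact Real.sqrt_nonneg _
  · exact le_rfl

theorem sval_le_sval_one (D : Matrix (Fin n) (Fin n) ℝ) (i : ℕ) : sval D i ≤ sval D 1 := by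
  by_cases h : 1 ≤ i ∧ i ≤ n
  · obtain ⟨t, rfl⟩ : ∃ t, i = t + 1 := ⟨i - 1, by omega⟩
    rw [show sval D (t + 1) = _ from sval_succ D ⟨t, by omega⟩,
      show sval D 1 = _ from sval_succ D ⟨0, by omega⟩]
    exact Real.sqrt_le_sqrt ((isSymmetric_toEuclideanLin_transpose_mul_self D).eigenvalues_antitone
      _ (Nat.zero_le t))
  · rw [sval, dif_neg h]
    exact sval_nonneg D 1

theorem vnorm_eq_norm_toLp (x : Fin n → ℝ) : vnorm x = ‖WithLp.toLp 2 x‖ := by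
  simp [vnorm, EuclideanSpace.norm_eq]

theorem vnorm_sq (x : Fin n → ℝ) : vnorm x ^ 2 = x ⬝ᵥ x := by
  rw [vnorm, Real.sq_sqrt (Finset.sum_nonneg fun i _ => sq_nonneg _)]
  simp [dotProduct, sq]

theorem inner_toEuclideanLin_transpose_mul_self (D : Matrix (Fin n) (Fin n) ℝ)
    (x : EuclideanSpace ℝ (Fin n)) :
    ⟪toEuclideanLin (Dᵀ * D) x, x⟫_ℝ = vnorm (D *ᵥ x.ofLp) ^ 2 := by
  rw [vnorm_sq, toLpLin_apply, EuclideanSpace.inner_eq_star_dotProduct, star_trivial,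
    ← mulVec_mulVec, dotProduct_mulVec, vecMul_transpose]

theorem eigenvalues_transpose_mul_self_nonneg (D : Matrix (Fin n) (Fin n) ℝ) (k : Fin n) :
    0 ≤ (isSymmetric_toEuclideanLin_transpose_mul_self D).eigenvalues
      finrank_euclideanSpace_fin k := by
  set hT := isSymmetric_toEuclideanLin_transpose_mul_self D
  have h := inner_toEuclideanLin_transpose_mul_self D
    (hT.eigenvectorBasis finrank_euclideanSpace_fin k)
  rw [hT.apply_eigenvectorBasis, real_inner_smul_left, real_inner_self_eq_norm_sq,
    (hT.eigenvectorBasis _).orthonormal.1 k, one_pow, mul_one, RCLike.ofReal_real_eq_id,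
    id_eq] at h
  rw [h]
  positivity

theorem exists_forall_dotProduct_eq_zero_sval_le_vnorm {ι : Type*} [Fintype ι]
    (D : Matrix (Fin n) (Fin n) ℝ) (u : ι → Fin n → ℝ) (i : ℕ) (hi : 1 ≤ i) (hin : i ≤ n)
    (h : Fintype.card ι < i) :
    ∃ x, vnorm x = 1 ∧ (∀ j, u j ⬝ᵥ x = 0) ∧ sval D i ≤ vnorm (D *ᵥ x) := by
  obtain ⟨t, rfl⟩ : ∃ t, i = t + 1 := ⟨i - 1, by omega⟩
  obtain ⟨x, hx, hux, hle⟩ :=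
    (isSymmetric_toEuclideanLin_transpose_mul_self D).exists_unit_orthogonal_eigenvalues_le_inner
      finrank_euclideanSpace_fin (fun j => WithLp.toLp 2 (u j)) ⟨t, by omega⟩ (by simp; omega)
  refine ⟨x.ofLp, by rw [vnorm_eq_norm_toLp]; exact hx, fun j => ?_, ?_⟩
  · simpa [EuclideanSpace.inner_eq_star_dotProduct, dotProduct_comm] using hux j
  · rw [show sval D (t + 1) = _ from sval_succ D ⟨t, by omega⟩]
    calc _ ≤ √(vnorm (D *ᵥ x.ofLp) ^ 2) :=
          Real.sqrt_le_sqrt (hle.trans_eq (inner_toEuclideanLin_transpose_mul_self D x))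
      _ = _ := Real.sqrt_sq (Real.sqrt_nonneg _)

theorem sum_vnorm_mulVec_sq_le_sum_sval_sq {ι : Type*} [Fintype ι] [DecidableEq ι]
    (D : Matrix (Fin n) (Fin n) ℝ) (q : ι → Fin n → ℝ)
    (hq : ∀ a b, q a ⬝ᵥ q b = if a = b then 1 else 0) (h : Fintype.card ι ≤ n) :
    ∑ j, vnorm (D *ᵥ q j) ^ 2 ≤ ∑ l ∈ Finset.Icc 1 (Fintype.card ι), sval D l ^ 2 := by
  rcases Nat.eq_zero_or_pos (Fintype.card ι) with h0 | hpos
  · have := Fintype.card_eq_zero_iff.mp h0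
    simp
  set hT := isSymmetric_toEuclideanLin_transpose_mul_self D
  have hq' : Orthonormal ℝ fun j => WithLp.toLp 2 (q j) := orthonormal_iff_ite.mpr fun a b => by
    rw [EuclideanSpace.inner_toLp_toLp, star_trivial, dotProduct_comm, hq]
  have key := hT.sum_inner_apply_self_le_sum_eigenvalues finrank_euclideanSpace_fin _ hq'
    ⟨Fintype.card ι - 1, by omega⟩ (by simp; omega)
  simp only [inner_toEuclideanLin_transpose_mul_self] at key
  refine key.trans_eq (Finset.sum_bij (fun k _ => k.val + 1) (fun k hk => ?_)
    (fun a _ b _ hab => ?_) (fun l hl => ?_) (fun k _ => ?_))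
  · simp only [Finset.mem_Iic, Fin.le_def] at hk
    simp only [Finset.mem_Icc]
    omega
  · exact Fin.ext (by simpa using hab)
  · simp only [Finset.mem_Icc] at hl
    exact ⟨⟨l - 1, by omega⟩, by simp [Fin.le_def]; omega, by simp; omega⟩
  · rw [sval_succ, Real.sq_sqrt (eigenvalues_transpose_mul_self_nonneg D k)]

theorem vnorm_mulVec_le_sval_one (D : Matrix (Fin n) (Fin n) ℝ) {x : Fin n → ℝ}
    (hx : vnorm x = 1) (hn : 0 < n) : vnorm (D *ᵥ x) ≤ sval D 1 := by
  have h := sum_vnorm_mulVec_sq_le_sum_sval_sq D (fun _ : Unit => x)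
    (fun _ _ => by rw [← vnorm_sq, hx]; simp) (Fintype.card_unit.trans_le hn)
  simp only [Finset.univ_unique, Finset.sum_singleton, Fintype.card_unit, Finset.Icc_self] at h
  exact (abs_le_of_sq_le_sq' h (sval_nonneg D 1)).2

/-- Ky Fan's principle for `z_1, …, z_i`, minus the lower bounds for `z_1, …, z_{i-1}`, leaves
`‖D zᵢ‖² ≤ σᵢ² + (i - 1)(2ε - ε²) σ₁²`. -/
theorem vnorm_mulVec_le_sval_add_of_orthonormal (D : Matrix (Fin n) (Fin n) ℝ)
    (z : ℕ → Fin n → ℝ) {ε : ℝ} (hε0 : 0 ≤ ε) (hε1 : ε ≤ 1) (i : ℕ) (hi : 1 ≤ i) (hin : i ≤ n)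
    (hz : ∀ a ∈ Finset.Icc 1 i, ∀ b ∈ Finset.Icc 1 i, z a ⬝ᵥ z b = if a = b then 1 else 0)
    (happrox : ∀ j, 1 ≤ j → j < i → (1 - ε) * sval D j ≤ vnorm (D *ᵥ z j)) :
    vnorm (D *ᵥ z i) ≤ sval D i + sval D 1 * √(2 * i * ε) := by
  have hsum := sum_vnorm_mulVec_sq_le_sum_sval_sq D (fun j : Finset.Icc 1 i => z j)
    (fun a b => (hz a a.2 b b.2).trans (if_congr Subtype.ext_iff.symm rfl rfl))
    (by simpa using hin)
  obtain ⟨m, rfl⟩ : ∃ m, i = m + 1 := ⟨i - 1, by omega⟩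
  rw [Finset.sum_coe_sort (Finset.Icc 1 (m + 1)) fun j => vnorm (D *ᵥ z j) ^ 2,
    Fintype.card_coe, Nat.card_Icc, Nat.add_sub_cancel, Finset.sum_Icc_succ_top (by omega),
    Finset.sum_Icc_succ_top (by omega)] at hsum
  have hterm : ∀ j ∈ Finset.Icc 1 m,
      sval D j ^ 2 - vnorm (D *ᵥ z j) ^ 2 ≤ 2 * ε * sval D 1 ^ 2 := by
    intro j hj
    rw [Finset.mem_Icc] at hj
    have hσ := sval_nonneg D j
    have hlow := pow_le_pow_left₀ (mul_nonneg (by linarith) hσ) (happrox j hj.1 (by omega)) 2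
    have hσ1 := pow_le_pow_left₀ hσ (sval_le_sval_one D j) 2
    nlinarith [mul_le_mul_of_nonneg_left hσ1 hε0, sq_nonneg (ε * sval D j)]
  have herr := Finset.sum_le_sum hterm
  rw [Finset.sum_sub_distrib, Finset.sum_const, Nat.card_Icc, nsmul_eq_mul] at herr
  have hσ := sval_nonneg D (m + 1)
  have hσ1 := sval_nonneg D 1
  have hroot := Real.sqrt_nonneg (2 * ((m + 1 : ℕ) : ℝ) * ε)
  have hsq : vnorm (D *ᵥ z (m + 1)) ^ 2 ≤
      sval D (m + 1) ^ 2 + (sval D 1 * √(2 * ((m + 1 : ℕ) : ℝ) * ε)) ^ 2 := by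
    rw [mul_pow, Real.sq_sqrt (by positivity)]
    push_cast at herr ⊢
    nlinarith [mul_nonneg hε0 (sq_nonneg (sval D 1))]
  refine (abs_le_of_sq_le_sq' (hsq.trans ?_) (by positivity)).2
  nlinarith [mul_nonneg hσ (mul_nonneg hσ1 hroot)]

theorem one_sub_sum_vecMulVec_mulVec {ι : Type*} (s : Finset ι) (q : ι → Fin n → ℝ)
    (y : Fin n → ℝ) :
    (1 - ∑ j ∈ s, vecMulVec (q j) (q j)) *ᵥ y = y - ∑ j ∈ s, (q j ⬝ᵥ y) • q j := by
  simp [sub_mulVec, sum_mulVec, vecMulVec_mulVec]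

theorem dotProduct_one_sub_sum_vecMulVec_mulVec_eq_zero {ι : Type*} [DecidableEq ι]
    (s : Finset ι) (q : ι → Fin n → ℝ)
    (hq : ∀ a ∈ s, ∀ b ∈ s, q a ⬝ᵥ q b = if a = b then 1 else 0) {a : ι} (ha : a ∈ s)
    (y : Fin n → ℝ) : q a ⬝ᵥ ((1 - ∑ j ∈ s, vecMulVec (q j) (q j)) *ᵥ y) = 0 := by
  rw [one_sub_sum_vecMulVec_mulVec, dotProduct_sub, dotProduct_sum]
  simp only [dotProduct_smul, smul_eq_mul]
  rw [Finset.sum_congr rfl fun j hj => by rw [hq a ha j hj]]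
  simp [ha]

section Deflation

variable {k : ℕ} {A : Matrix (Fin n) (Fin n) ℝ} {z : ℕ → Fin n → ℝ}
  {B : ℕ → Matrix (Fin n) (Fin n) ℝ}

theorem deflation_eq_one_sub_sum_vecMulVec_mul (hB1 : B 1 = A)
    (hBrec : ∀ i, 1 ≤ i → i ≤ k → B (i + 1) = B i - vecMulVec (z i) (z i) * A) (i : ℕ)
    (hi : 1 ≤ i) (hik : i ≤ k + 1) :
    B i = (1 - ∑ j ∈ Finset.Ico 1 i, vecMulVec (z j) (z j)) * A := by
  induction i, hi using Nat.le_induction with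
  | base => simp [hB1]
  | succ i hi ih =>
    rw [hBrec i hi (by omega), ih (by omega), Finset.sum_Ico_succ_top hi, sub_add_eq_sub_sub,
      sub_mul _ (vecMulVec _ _)]

theorem transpose_deflation_mulVec (hB1 : B 1 = A)
    (hBrec : ∀ i, 1 ≤ i → i ≤ k → B (i + 1) = B i - vecMulVec (z i) (z i) * A) (i : ℕ)
    (hi : 1 ≤ i) (hik : i ≤ k + 1) (x : Fin n → ℝ) (hx : ∀ j ∈ Finset.Ico 1 i, z j ⬝ᵥ x = 0) :
    (B i)ᵀ *ᵥ x = Aᵀ *ᵥ x := by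
  rw [deflation_eq_one_sub_sum_vecMulVec_mul hB1 hBrec i hi hik, transpose_mul, ← mulVec_mulVec]
  simp only [transpose_sub, transpose_one, transpose_sum, transpose_vecMulVec,
    one_sub_sum_vecMulVec_mulVec]
  rw [Finset.sum_eq_zero fun j hj => by rw [hx j hj, zero_smul], sub_zero]

theorem deflation_orthonormal (hB1 : B 1 = A)
    (hBrec : ∀ i, 1 ≤ i → i ≤ k → B (i + 1) = B i - vecMulVec (z i) (z i) * A)
    (hunit : ∀ i, 1 ≤ i → i ≤ k → vnorm (z i) = 1)
    (hcol : ∀ i, 1 ≤ i → i ≤ k → ∃ w : Fin n → ℝ, (B i) *ᵥ w = z i) :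
    ∀ a ∈ Finset.Icc 1 k, ∀ b ∈ Finset.Icc 1 k, z a ⬝ᵥ z b = if a = b then 1 else 0 := by
  suffices h : ∀ l, 1 ≤ l → l ≤ k + 1 →
      ∀ a ∈ Finset.Ico 1 l, ∀ b ∈ Finset.Ico 1 l, z a ⬝ᵥ z b = if a = b then 1 else 0 by
    simpa [Finset.Ico_add_one_right_eq_Icc] using h (k + 1) (by omega) le_rfl
  intro l hl
  induction l, hl using Nat.le_induction with
  | base => simp
  | succ l hl ih =>
    intro hlk
    have hperp : ∀ a ∈ Finset.Ico 1 l, z a ⬝ᵥ z l = 0 := fun a ha => by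
      obtain ⟨w, hw⟩ := hcol l hl (by omega)
      rw [← hw, deflation_eq_one_sub_sum_vecMulVec_mul hB1 hBrec l hl (by omega), ← mulVec_mulVec]
      exact dotProduct_one_sub_sum_vecMulVec_mulVec_eq_zero _ _ (ih (by omega)) ha _
    intro a ha b hb
    simp only [Finset.mem_Ico] at ha hb
    rcases Nat.lt_or_ge a l with ha' | ha' <;> rcases Nat.lt_or_ge b l with hb' | hb'
    · exact ih (by omega) a (by simp; omega) b (by simp; omega)
    · rw [show b = l by omega, if_neg (by omega)]
      exact hperp a (by simp; omega)
    · rw [show a = l by omega, if_neg (by omega), dotProduct_comm]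
      exact hperp b (by simp; omega)
    · rw [show a = l by omega, show b = l by omega, if_pos rfl, ← vnorm_sq, hunit l hl (by omega),
        one_pow]

theorem sval_le_sval_one_deflation (hB1 : B 1 = A)
    (hBrec : ∀ i, 1 ≤ i → i ≤ k → B (i + 1) = B i - vecMulVec (z i) (z i) * A) (i : ℕ)
    (hi : 1 ≤ i) (hik : i ≤ k + 1) (hin : i ≤ n) : sval A i ≤ sval (B i) 1 := by
  obtain ⟨x, hx, hxz, hle⟩ := exists_forall_dotProduct_eq_zero_sval_le_vnorm Aᵀ
    (fun j : Finset.Ico 1 i => z j) i hi hin (by simp; omega)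
  rw [← sval_transpose A, ← sval_transpose (B i),
    ← transpose_deflation_mulVec hB1 hBrec i hi hik x fun j hj => hxz ⟨j, hj⟩] at *
  exact hle.trans (vnorm_mulVec_le_sval_one _ hx (by omega))

end Deflation

end Matrix

/-- **Correctness of singular value estimation via repeated deflation.** If
`A⁽¹⁾ = A`, `A⁽ⁱ⁺¹⁾ = A⁽ⁱ⁾ − zᵢzᵢᵀA`, each `zᵢ` is a unit vector in the column space
of `A⁽ⁱ⁾` with `‖(A⁽ⁱ⁾)ᵀzᵢ‖₂ ≥ (1−ε)σ₁(A⁽ⁱ⁾)`, then the `zᵢ` are pairwise orthogonal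
and `(1−ε)σᵢ(A) ≤ ‖Aᵀzᵢ‖₂ ≤ σᵢ(A) + σ₁(A)√(2iε)` for all `i ≤ k`. -/
theorem deflation_all_singular_values
    (n k : ℕ) (A : Matrix (Fin n) (Fin n) ℝ) (ε : ℝ) (hε : ε ∈ Set.Ioo (0 : ℝ) 1)
    (hk : k ≤ n) (z : ℕ → Fin n → ℝ) (B : ℕ → Matrix (Fin n) (Fin n) ℝ)
    (hB1 : B 1 = A)
    (hBrec : ∀ i, 1 ≤ i → i ≤ k → B (i + 1) = B i - Matrix.vecMulVec (z i) (z i) * A)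
    (hunit : ∀ i, 1 ≤ i → i ≤ k → vnorm (z i) = 1)
    (hcol : ∀ i, 1 ≤ i → i ≤ k → ∃ w : Fin n → ℝ, (B i) *ᵥ w = z i)
    (happrox : ∀ i, 1 ≤ i → i ≤ k →
      (1 - ε) * sval (B i) 1 ≤ vnorm ((B i)ᵀ *ᵥ z i)) :
    (∀ i j, 1 ≤ i → i ≤ k → 1 ≤ j → j ≤ k → i ≠ j → z i ⬝ᵥ z j = 0) ∧
    (∀ i, 1 ≤ i → i ≤ k →
      (1 - ε) * sval A i ≤ vnorm (Aᵀ *ᵥ z i) ∧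
      vnorm (Aᵀ *ᵥ z i) ≤ sval A i + sval A 1 * Real.sqrt (2 * i * ε)) := by
  obtain ⟨hε0, hε1⟩ := hε
  have hz := deflation_orthonormal hB1 hBrec hunit hcol
  have hlow : ∀ i, 1 ≤ i → i ≤ k → (1 - ε) * sval A i ≤ vnorm (Aᵀ *ᵥ z i) := fun i hi hik =>
    calc (1 - ε) * sval A i ≤ (1 - ε) * sval (B i) 1 := mul_le_mul_of_nonneg_left
          (sval_le_sval_one_deflation hB1 hBrec i hi (by omega) (by omega)) (by linarith)
      _ ≤ vnorm ((B i)ᵀ *ᵥ z i) := happrox i hi hik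
      _ = vnorm (Aᵀ *ᵥ z i) := by
          rw [transpose_deflation_mulVec hB1 hBrec i hi (by omega) _ fun j hj => by
            simp only [Finset.mem_Ico] at hj
            simpa [hj.2.ne] using hz j (by simp; omega) i (by simp; omega)]
  refine ⟨fun i j hi hik hj hjk hij => by
      simpa [hij] using hz i (by simp; omega) j (by simp; omega),
    fun i hi hik => ⟨hlow i hi hik, ?_⟩⟩
  rw [← sval_transpose A i, ← sval_transpose A 1]
  refine vnorm_mulVec_le_sval_add_of_orthonormal Aᵀ z hε0.le hε1.le i hi (by omega)
    (fun a ha b hb => hz a (by simp at ha ⊢; omega) b (by simp at hb ⊢; omega))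
    fun j hj hji => ?_
  rw [sval_transpose]
  exact hlow j hj (by omega)
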